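/- arXiv:1509.08453 — 2 statements merged into one kernel-verified Lean document; each statement's English description precedes it below -/
import Mathlib

section
/- Let C be a triangulated category equipped with a weight structure w, let M ∈ C_{w≤0} and N ∈ C_{w≥0}. Fix a distinguished triangle X_1[1] → M[1] → Y_1[1] → X_1[2] which is a 0-weight decomposition of M[1] (so X_1[1] ∈ C_{w≤0} and Y_1[1] ∈ C_{w≥1}), and a 0-weight decomposition X_2 →g N → Y → X_2[1] of N; let f : M → Y_1 be the morphism obtained by deshifting M[1] → Y_1[1]. Then Y_1 ∈ C_{w=0}, X_2 ∈ C_{w=0}, and every morphism from M to N can be written as g ∘ h ∘ f for some morphism h : Y_1 → X_2. -/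
open CategoryTheory CategoryTheory.Limits CategoryTheory.Pretriangulated ZeroObject

universe v u

variable (C : Type u) [Category.{v} C] [HasZeroObject C] [Preadditive C] [HasShift C ℤ]
  [∀ n : ℤ, (shiftFunctor C n).Additive] [Pretriangulated C]

/-- A weight structure on a triangulated category `C`: a pair of retract-closed classes
`le = C_{w≤0}` and `ge = C_{w≥0}` satisfying semi-invariance with respect to translations,
orthogonality, and the existence of weight decompositions. -/
structure WeightStructure where
  /-- the class `C_{w≤0}` -/
  le : Set C
  /-- the class `C_{w≥0}` -/
  ge : Set C
  /-- `C_{w≤0}` is closed under retracts -/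
  le_retract : ∀ ⦃X Y : C⦄ (i : X ⟶ Y) (r : Y ⟶ X), i ≫ r = 𝟙 X → le Y → le X
  /-- `C_{w≥0}` is closed under retracts -/
  ge_retract : ∀ ⦃X Y : C⦄ (i : X ⟶ Y) (r : Y ⟶ X), i ≫ r = 𝟙 X → ge Y → ge X
  /-- `C_{w≤0} ⊆ C_{w≤0}[1]`, i.e. `X ∈ C_{w≤0} → X[-1] ∈ C_{w≤0}` -/
  le_shift : ∀ ⦃X : C⦄, le X → le ((shiftFunctor C (-1 : ℤ)).obj X)
  /-- `C_{w≥0}[1] ⊆ C_{w≥0}`, i.e. `X ∈ C_{w≥0} → X[1] ∈ C_{w≥0}` -/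
  ge_shift : ∀ ⦃X : C⦄, ge X → ge ((shiftFunctor C (1 : ℤ)).obj X)
  /-- orthogonality: `Hom(X, Y[1]) = 0` for `X ∈ C_{w≤0}`, `Y ∈ C_{w≥0}` -/
  orth : ∀ ⦃X Y : C⦄, le X → ge Y → ∀ f : X ⟶ (shiftFunctor C (1 : ℤ)).obj Y, f = 0
  /-- existence of weight decompositions -/
  decomp : ∀ M : C, ∃ (X Y : C) (f : X ⟶ M) (g : M ⟶ Y)
      (h : Y ⟶ (shiftFunctor C (1 : ℤ)).obj X),
      Triangle.mk f g h ∈ (distTriang C) ∧ le X ∧ ge ((shiftFunctor C (-1 : ℤ)).obj Y)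

variable {C}

namespace WeightStructure

/-- `X ∈ C_{w≤i} = C_{w≤0}[i]`, i.e. `X[-i] ∈ C_{w≤0}`. -/
def leDeg (w : WeightStructure C) (i : ℤ) (X : C) : Prop :=
  w.le ((shiftFunctor C (-i)).obj X)

/-- `X ∈ C_{w≥i} = C_{w≥0}[i]`, i.e. `X[-i] ∈ C_{w≥0}`. -/
def geDeg (w : WeightStructure C) (i : ℤ) (X : C) : Prop :=
  w.ge ((shiftFunctor C (-i)).obj X)

/-- The triangle `A → M → B → A[1]` is an `m`-weight decomposition of `M`:
it is distinguished, `A ∈ C_{w≤m}` and `B ∈ C_{w≥m+1}`. -/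
def IsWeightDecomp (w : WeightStructure C) (m : ℤ) {A M B : C}
    (f : A ⟶ M) (g : M ⟶ B) (h : B ⟶ (shiftFunctor C (1 : ℤ)).obj A) : Prop :=
  Triangle.mk f g h ∈ (distTriang C) ∧ w.leDeg m A ∧ w.geDeg (m + 1) B

/-- `g : M ⟶ N` kills weights `m,…,n`: there exist an `n`-weight decomposition of `M` and an
`(m-1)`-weight decomposition of `N` such that the composite `w_{≤n}M → M → N → w_{≥m}N` is `0`. -/
def KillsWeights (w : WeightStructure C) (m n : ℤ) {M N : C} (g : M ⟶ N) : Prop :=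
  ∃ (A B A' B' : C) (f : A ⟶ M) (p : M ⟶ B) (δ : B ⟶ (shiftFunctor C (1 : ℤ)).obj A)
    (f' : A' ⟶ N) (p' : N ⟶ B') (δ' : B' ⟶ (shiftFunctor C (1 : ℤ)).obj A'),
    w.IsWeightDecomp n f p δ ∧ w.IsWeightDecomp (m - 1) f' p' δ' ∧ f ≫ g ≫ p' = 0

/-- `M` is without weights `m,…,n` if `𝟙 M` kills weights `m,…,n`. -/
def WithoutWeights (w : WeightStructure C) (m n : ℤ) (M : C) : Prop :=
  w.KillsWeights m n (𝟙 M)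

end WeightStructure

/-!
Both halves of the heart condition come from the orthogonality characterisations
`C_{w≤0} = ⊥(C_{w≥1})` and `C_{w≥0} = (C_{w≤-1})⊥`, which make both classes extension-closed:
`Y₁` is an extension of `X₁[1]` by `M`, and `X₂` an extension of `N` by `Y[-1]`.
For the factorisation, `φ : M ⟶ N` kills `N ⟶ Y` by orthogonality, so it lifts to `ψ : M ⟶ X₂`;
then `ψ[1]` kills `X₁[1] ⟶ M[1]`, so it extends along `M[1] ⟶ Y₁[1]`, and one deshifts.
-/

namespace WeightStructure

variable (w : WeightStructure C)

lemma le_of_iso {X Y : C} (e : X ≅ Y) (h : w.le X) : w.le Y :=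
  w.le_retract e.inv e.hom e.inv_hom_id h

lemma ge_of_iso {X Y : C} (e : X ≅ Y) (h : w.ge X) : w.ge Y :=
  w.ge_retract e.inv e.hom e.inv_hom_id h

lemma leDeg_zero_iff (X : C) : w.leDeg 0 X ↔ w.le X := by
  rw [leDeg, neg_zero]
  let e := (shiftFunctorZero C ℤ).app X
  exact ⟨w.le_of_iso e, w.le_of_iso e.symm⟩

lemma geDeg_zero_iff (X : C) : w.geDeg 0 X ↔ w.ge X := by
  rw [geDeg, neg_zero]
  let e := (shiftFunctorZero C ℤ).app X
  exact ⟨w.ge_of_iso e, w.ge_of_iso e.symm⟩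

lemma leDeg_one_shift_iff (X : C) : w.leDeg 1 (X⟦(1 : ℤ)⟧) ↔ w.le X :=
  let e := (shiftFunctorCompIsoId C (1 : ℤ) (-1) (by omega)).app X
  ⟨w.le_of_iso e, w.le_of_iso e.symm⟩

lemma geDeg_one_shift_iff (X : C) : w.geDeg 1 (X⟦(1 : ℤ)⟧) ↔ w.ge X :=
  let e := (shiftFunctorCompIsoId C (1 : ℤ) (-1) (by omega)).app X
  ⟨w.ge_of_iso e, w.ge_of_iso e.symm⟩

lemma hom_eq_zero_of_le_of_geDeg_one {X Y : C} (hX : w.le X) (hY : w.geDeg 1 Y) (f : X ⟶ Y) :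
    f = 0 := by
  let e := (shiftFunctorCompIsoId C (-1 : ℤ) 1 (by omega)).app Y
  rw [← cancel_mono e.inv, zero_comp]
  exact w.orth hX hY _

lemma hom_eq_zero_of_le_shift_of_ge {X Y : C} (hX : w.le (X⟦(1 : ℤ)⟧)) (hY : w.ge Y)
    (f : X ⟶ Y) : f = 0 :=
  (shiftFunctor C (1 : ℤ)).map_injective (by rw [Functor.map_zero]; exact w.orth hX hY _)

lemma le_of_forall_hom_eq_zero {X : C} (h : ∀ ⦃Y : C⦄, w.geDeg 1 Y → ∀ f : X ⟶ Y, f = 0) :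
    w.le X := by
  obtain ⟨A, B, a, b, c, hT, hA, hB⟩ := w.decomp X
  obtain ⟨s, hs⟩ := Triangle.coyoneda_exact₂ _ hT (𝟙 X) (by rw [h hB b]; exact comp_zero)
  exact w.le_retract s a hs.symm hA

lemma ge_of_forall_hom_eq_zero {X : C}
    (h : ∀ ⦃Y : C⦄, w.le (Y⟦(1 : ℤ)⟧) → ∀ f : Y ⟶ X, f = 0) : w.ge X := by
  obtain ⟨A, B, a, b, c, hT, hA, hB⟩ := w.decomp (X⟦(1 : ℤ)⟧)
  -- `a` is the shift of a map `A[-1] ⟶ X` whose source lies in `C_{w≤-1}`.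
  let e := (shiftFunctorCompIsoId C (-1 : ℤ) 1 (by omega)).app A
  obtain ⟨a', ha'⟩ := (shiftFunctor C (1 : ℤ)).map_surjective (e.hom ≫ a)
  have ha : a = 0 := by
    rw [← cancel_epi e.hom, comp_zero, ← ha', h (w.le_of_iso e.symm hA) a', Functor.map_zero]
  obtain ⟨r, hr⟩ : ∃ r : B ⟶ X⟦(1 : ℤ)⟧, 𝟙 _ = b ≫ r :=
    Triangle.yoneda_exact₂ _ hT (𝟙 _) (by rw [ha]; exact zero_comp)
  have hB' : w.ge (X⟦(1 : ℤ)⟧⟦(-1 : ℤ)⟧) :=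
    w.ge_retract (b⟦(-1 : ℤ)⟧') (r⟦(-1 : ℤ)⟧')
      (by rw [← Functor.map_comp, ← hr, (shiftFunctor C (-1 : ℤ)).map_id]) hB
  exact w.ge_of_iso ((shiftFunctorCompIsoId C (1 : ℤ) (-1) (by omega)).app X) hB'

lemma le_of_distTriang (T : Triangle C) (hT : T ∈ distTriang C) (h₁ : w.le T.obj₁)
    (h₃ : w.le T.obj₃) : w.le T.obj₂ := by
  refine w.le_of_forall_hom_eq_zero fun Y hY f => ?_
  obtain ⟨g, rfl⟩ := Triangle.yoneda_exact₂ T hT f (w.hom_eq_zero_of_le_of_geDeg_one h₁ hY _)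
  rw [w.hom_eq_zero_of_le_of_geDeg_one h₃ hY g, comp_zero]

lemma leDeg_of_distTriang (n : ℤ) (T : Triangle C) (hT : T ∈ distTriang C)
    (h₁ : w.leDeg n T.obj₁) (h₃ : w.leDeg n T.obj₃) : w.leDeg n T.obj₂ :=
  w.le_of_distTriang _ (Triangle.shift_distinguished T hT (-n)) h₁ h₃

lemma ge_of_distTriang (T : Triangle C) (hT : T ∈ distTriang C) (h₁ : w.ge T.obj₁)
    (h₃ : w.ge T.obj₃) : w.ge T.obj₂ := by
  refine w.ge_of_forall_hom_eq_zero fun Y hY f => ?_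
  obtain ⟨g, rfl⟩ := Triangle.coyoneda_exact₂ T hT f (w.hom_eq_zero_of_le_shift_of_ge hY h₃ _)
  rw [w.hom_eq_zero_of_le_shift_of_ge hY h₁ g, zero_comp]

section

variable {A B D : C} {u : A ⟶ B} {v : B ⟶ D} {δ : D ⟶ A⟦(1 : ℤ)⟧}

lemma exists_eq_comp_of_le (hT : Triangle.mk u v δ ∈ distTriang C) {X : C} (hX : w.le X)
    (hD : w.geDeg 1 D) (f : X ⟶ B) : ∃ g : X ⟶ A, f = g ≫ u :=
  Triangle.coyoneda_exact₂ _ hT f (w.hom_eq_zero_of_le_of_geDeg_one hX hD _)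

lemma exists_eq_comp_of_ge (hT : Triangle.mk u v δ ∈ distTriang C) {Y : C} (hY : w.ge Y)
    (hA : w.le A) (f : B ⟶ Y⟦(1 : ℤ)⟧) : ∃ g : D ⟶ Y⟦(1 : ℤ)⟧, f = v ≫ g :=
  Triangle.yoneda_exact₂ _ hT f (w.orth hA hY _)

end

end WeightStructure

/-- Proposition 1.2.1(9): for `M ∈ C_{w≤0}` and `N ∈ C_{w≥0}`, fixing a `0`-weight
decomposition `X₁[1] → M[1] → Y₁[1] → X₁[2]` of `M[1]` and a `0`-weight decomposition
`X₂ → N → Y → X₂[1]` of `N`, we have `Y₁, X₂ ∈ C_{w=0}` and every morphism `M ⟶ N`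
factors as `g ∘ h ∘ f`. -/
theorem morphism_factors_through_heart (w : WeightStructure C) {M N : C}
    (hM : w.le M) (hN : w.ge N) {X₁ Y₁ : C}
    (α : (shiftFunctor C (1 : ℤ)).obj X₁ ⟶ (shiftFunctor C (1 : ℤ)).obj M)
    (β : (shiftFunctor C (1 : ℤ)).obj M ⟶ (shiftFunctor C (1 : ℤ)).obj Y₁)
    (γ : (shiftFunctor C (1 : ℤ)).obj Y₁ ⟶
      (shiftFunctor C (1 : ℤ)).obj ((shiftFunctor C (1 : ℤ)).obj X₁))
    (hd : w.IsWeightDecomp 0 α β γ)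
    (f : M ⟶ Y₁) (hf : (shiftFunctor C (1 : ℤ)).map f = β)
    {X₂ Y : C} (g : X₂ ⟶ N) (q : N ⟶ Y) (δ : Y ⟶ (shiftFunctor C (1 : ℤ)).obj X₂)
    (hd' : w.IsWeightDecomp 0 g q δ) :
    (w.leDeg 0 Y₁ ∧ w.geDeg 0 Y₁) ∧ (w.leDeg 0 X₂ ∧ w.geDeg 0 X₂) ∧
    ∀ φ : M ⟶ N, ∃ h : Y₁ ⟶ X₂, φ = f ≫ h ≫ g := by
  obtain ⟨hT₁, hX₁, hY₁⟩ := hd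
  obtain ⟨hT₂, hX₂, hY⟩ := hd'
  rw [zero_add] at hY₁ hY
  have hX₁le : w.le (X₁⟦(1 : ℤ)⟧) := (w.leDeg_zero_iff _).1 hX₁
  have hY₁ge : w.ge Y₁ := (w.geDeg_one_shift_iff _).1 hY₁
  have hY₁le : w.le Y₁ := (w.leDeg_one_shift_iff _).1 <|
    w.leDeg_of_distTriang 1 _ (rot_of_distTriang _ hT₁) ((w.leDeg_one_shift_iff _).2 hM)
      ((w.leDeg_one_shift_iff _).2 hX₁le)
  have hX₂ge : w.ge X₂ := w.ge_of_distTriang _ (inv_rot_of_distTriang _ hT₂) hY hN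
  refine ⟨⟨(w.leDeg_zero_iff _).2 hY₁le, (w.geDeg_zero_iff _).2 hY₁ge⟩,
    ⟨hX₂, (w.geDeg_zero_iff _).2 hX₂ge⟩, fun φ => ?_⟩
  obtain ⟨ψ, rfl⟩ := w.exists_eq_comp_of_le hT₂ hM hY φ
  obtain ⟨h', hh'⟩ := w.exists_eq_comp_of_ge hT₁ hX₂ge hX₁le (ψ⟦(1 : ℤ)⟧')
  obtain ⟨h, rfl⟩ := (shiftFunctor C (1 : ℤ)).map_surjective h'
  have hψ : ψ = f ≫ h :=
    (shiftFunctor C (1 : ℤ)).map_injective (by rw [Functor.map_comp _ f h, hf]; exact hh')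
  exact ⟨h, hψ ▸ Category.assoc f h g⟩
end

section
/- Let C be a triangulated category equipped with a weight structure w, and let m' < m ≤ n be integers. If a morphism g : M → N kills weights m,…,n and a morphism h : N → O kills weights m',…,m−1, then the composite h ∘ g kills weights m',…,n. -/
open CategoryTheory CategoryTheory.Limits CategoryTheory.Pretriangulated ZeroObject

universe v u

variable (C : Type u) [Category.{v} C] [HasZeroObject C] [Preadditive C] [HasShift C ℤ]
  [∀ n : ℤ, (shiftFunctor C n).Additive] [Pretriangulated C]

variable {C}

/- Both decompositions of `N` are `(m-1)`-weight decompositions: `f ≫ g` factors through the first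
by `hg`, the first lifts along the second by orthogonality, and `hh` kills the second. -/

namespace WeightStructure

variable (w : WeightStructure C)

lemma hom_eq_zero_of_leDeg_of_geDeg {i : ℤ} {X Y : C} (hX : w.leDeg i X) (hY : w.geDeg (i + 1) Y)
    (f : X ⟶ Y) : f = 0 := by
  let e := (shiftFunctorAdd' C (-(i + 1)) 1 (-i) (by ring)).app Y
  have h : (shiftFunctor C (-i)).map f ≫ e.hom = 0 := w.orth hX hY _
  rwa [Preadditive.IsIso.comp_right_eq_zero, Functor.map_eq_zero_iff] at h

variable {w}

lemma IsWeightDecomp.exists_lift {i : ℤ} {A M B : C} {f : A ⟶ M} {p : M ⟶ B}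
    {δ : B ⟶ (shiftFunctor C (1 : ℤ)).obj A} (hd : w.IsWeightDecomp i f p δ) {X : C}
    (hX : w.leDeg i X) (x : X ⟶ M) : ∃ φ : X ⟶ A, x = φ ≫ f :=
  Triangle.coyoneda_exact₂ _ hd.1 x (w.hom_eq_zero_of_leDeg_of_geDeg hX hd.2.2 _)

end WeightStructure

theorem killsWeights_comp_general (w : WeightStructure C) (m' m n : ℤ)
    {M N O : C} (g : M ⟶ N) (h : N ⟶ O)
    (hg : w.KillsWeights m n g) (hh : w.KillsWeights m' (m - 1) h) :
    w.KillsWeights m' n (g ≫ h) := by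
  obtain ⟨A, B, A', B', f, p, δ, f', p', δ', hdM, hdN, hfg⟩ := hg
  obtain ⟨A'', _, A₃, B₃, f'', _, _, f₃, p₃, δ₃, hdN', hdO, hh⟩ := hh
  refine ⟨A, B, A₃, B₃, f, p, δ, f₃, p₃, δ₃, hdM, hdO, ?_⟩
  obtain ⟨φ, hφ⟩ : ∃ φ : A ⟶ A', f ≫ g = φ ≫ f' :=
    Triangle.coyoneda_exact₂ _ hdN.1 (f ≫ g) ((Category.assoc _ _ _).trans hfg)
  obtain ⟨ψ, hψ⟩ := hdN'.exists_lift hdN.2.1 f'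
  calc f ≫ (g ≫ h) ≫ p₃ = (f ≫ g) ≫ h ≫ p₃ := by simp only [Category.assoc]
    _ = φ ≫ ψ ≫ f'' ≫ h ≫ p₃ := by rw [hφ, hψ]; simp only [Category.assoc]
    _ = 0 := by rw [hh, comp_zero, comp_zero]

/-- Theorem 2.1.1(3): if `g : M ⟶ N` kills weights `m,…,n` and `h : N ⟶ O` kills weights
`m',…,m-1` (for `m' < m`), then `h ∘ g` kills weights `m',…,n`. -/
theorem killsWeights_comp (w : WeightStructure C) (m' m n : ℤ) (h1 : m' < m) (h2 : m ≤ n)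
    {M N O : C} (g : M ⟶ N) (h : N ⟶ O)
    (hg : w.KillsWeights m n g) (hh : w.KillsWeights m' (m - 1) h) :
    w.KillsWeights m' n (g ≫ h) :=
  killsWeights_comp_general w m' m n g h hg hh
end
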